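/- For i ≥ 1 and all real x with x² ≥ 1 (or treating the formula in an appropriate ring), p_i(x) = (1/(2x)) · [√(x²(x²-1)) · ((1-2x²+2√(x²(x²-1)))^i − (1-2x²−2√(x²(x²-1)))^i) + x² · ((1-2x²+2√(x²(x²-1)))^i + (1-2x²−2√(x²(x²-1)))^i)], where p_i(x) = ∑_{j=1}^{i} (-1)^j · 2^{2j-2} · C(i+j-2, 2j-2) · ((2i-1)/(2j-1)) · x^{2j-1}. -/

import Mathlib

noncomputable def p (i : ℕ) (x : ℝ) : ℝ :=
  ∑ j ∈ Finset.Icc 1 i,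
    (-1 : ℝ) ^ j * (2 : ℝ) ^ (2 * j - 2) * (Nat.choose (i + j - 2) (2 * j - 2)) *
      (((2 * i - 1 : ℕ) : ℝ) / ((2 * j - 1 : ℕ) : ℝ)) * x ^ (2 * j - 1)

namespace Stmt9

noncomputable def c (i j : ℕ) : ℝ :=
  (-1 : ℝ) ^ j * (2 : ℝ) ^ (2 * j - 2) * (Nat.choose (i + j - 2) (2 * j - 2)) *
      (((2 * i - 1 : ℕ) : ℝ) / ((2 * j - 1 : ℕ) : ℝ))

noncomputable def q (i : ℕ) (x : ℝ) : ℝ :=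
  (1 / (2 * x)) *
      (Real.sqrt (x ^ 2 * (x ^ 2 - 1)) *
          ((1 - 2 * x ^ 2 + 2 * Real.sqrt (x ^ 2 * (x ^ 2 - 1))) ^ i
            - (1 - 2 * x ^ 2 - 2 * Real.sqrt (x ^ 2 * (x ^ 2 - 1))) ^ i)
        + x ^ 2 *
          ((1 - 2 * x ^ 2 + 2 * Real.sqrt (x ^ 2 * (x ^ 2 - 1))) ^ i
            + (1 - 2 * x ^ 2 - 2 * Real.sqrt (x ^ 2 * (x ^ 2 - 1))) ^ i))

lemma p_eq (i : ℕ) (x : ℝ) :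
    p i x = ∑ k ∈ Finset.range i, c i (k + 1) * x ^ (2 * k + 1) := by
  rw [p, ← Finset.Ico_add_one_right_eq_Icc, Finset.sum_Ico_eq_sum_range]
  simp only [Nat.add_sub_cancel]
  refine Finset.sum_congr rfl fun k _ => ?_
  rw [c, show 1 + k = k + 1 from by omega, show 2 * (k + 1) - 1 = 2 * k + 1 from by omega]

lemma c_eq (M L : ℕ) :
    c (M + 1) (L + 1) =
      (-1 : ℝ) ^ (L + 1) * 4 ^ L * (Nat.choose (M + L) (2 * L)) * (2 * M + 1) / (2 * L + 1) := by
  rw [c, show 2 * (L + 1) - 2 = 2 * L from by omega,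
    show M + 1 + (L + 1) - 2 = M + L from by omega,
    show 2 * (M + 1) - 1 = 2 * M + 1 from by omega,
    show 2 * (L + 1) - 1 = 2 * L + 1 from by omega, pow_mul]
  push_cast
  ring

lemma c_zero (M L : ℕ) (h : M < L) : c (M + 1) (L + 1) = 0 := by
  rw [c_eq, Nat.choose_eq_zero_of_lt (by omega)]
  simp

lemma aux_b (m l : ℕ) :
    ((2 * l + 1 : ℝ)) * (Nat.choose (m + l + 1) (2 * l + 1)) +
      (l : ℝ) * (Nat.choose (m + l + 1) (2 * l)) =
    ((m : ℝ) + 1) * (Nat.choose (m + l + 1) (2 * l)) := by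
  rcases le_or_gt l (m + 1) with h | h
  · have h2 := Nat.choose_succ_right_eq (m + l + 1) (2 * l)
    rw [show m + l + 1 - 2 * l = m + 1 - l from by omega] at h2
    have h3 : ((Nat.choose (m + l + 1) (2 * l + 1) * (2 * l + 1) : ℕ) : ℝ)
        = ((Nat.choose (m + l + 1) (2 * l) * (m + 1 - l) : ℕ) : ℝ) := by rw [h2]
    rw [Nat.cast_mul, Nat.cast_mul, Nat.cast_sub (by omega)] at h3
    push_cast at h3 ⊢
    linarith [h3]
  · rw [Nat.choose_eq_zero_of_lt (by omega : m + l + 1 < 2 * l),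
      Nat.choose_eq_zero_of_lt (by omega : m + l + 1 < 2 * l + 1)]
    simp

lemma core (m l : ℕ) :
    ((2 * l + 1 : ℝ)) * (2 * m + 5) * (Nat.choose (m + l + 3) (2 * l + 2)) =
      (2 * l + 3) * (2 * m + 3) * (Nat.choose (m + l + 1) (2 * l)) +
      2 * (2 * l + 1) * (2 * m + 3) * (Nat.choose (m + l + 2) (2 * l + 2)) -
      (2 * l + 1) * (2 * m + 1) * (Nat.choose (m + l + 1) (2 * l + 2)) := by
  have p1 : Nat.choose (m + l + 3) (2 * l + 2)
      = Nat.choose (m + l + 2) (2 * l + 1) + Nat.choose (m + l + 2) (2 * l + 2) :=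
    Nat.choose_succ_succ _ _
  have p2 : Nat.choose (m + l + 2) (2 * l + 2)
      = Nat.choose (m + l + 1) (2 * l + 1) + Nat.choose (m + l + 1) (2 * l + 2) :=
    Nat.choose_succ_succ _ _
  have p3 : Nat.choose (m + l + 2) (2 * l + 1)
      = Nat.choose (m + l + 1) (2 * l) + Nat.choose (m + l + 1) (2 * l + 1) :=
    Nat.choose_succ_succ _ _
  rw [p1, p3, p2]
  have hb := aux_b m l
  push_cast
  linear_combination 4 * hb

lemma key (m k : ℕ) :
    c (m + 3) (k + 2) = -4 * c (m + 2) (k + 1) + 2 * c (m + 2) (k + 2) - c (m + 1) (k + 2) := by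
  have e1 : c (m + 3) (k + 2)
      = (-1 : ℝ) ^ (k + 1 + 1) * 4 ^ (k + 1) * (Nat.choose (m + 2 + (k + 1)) (2 * (k + 1)))
        * (2 * (m + 2 : ℕ) + 1) / (2 * (k + 1 : ℕ) + 1) := c_eq (m + 2) (k + 1)
  have e2 : c (m + 2) (k + 1)
      = (-1 : ℝ) ^ (k + 1) * 4 ^ k * (Nat.choose (m + 1 + k) (2 * k))
        * (2 * (m + 1 : ℕ) + 1) / (2 * (k : ℕ) + 1) := c_eq (m + 1) k
  have e3 : c (m + 2) (k + 2)
      = (-1 : ℝ) ^ (k + 1 + 1) * 4 ^ (k + 1) * (Nat.choose (m + 1 + (k + 1)) (2 * (k + 1)))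
        * (2 * (m + 1 : ℕ) + 1) / (2 * (k + 1 : ℕ) + 1) := c_eq (m + 1) (k + 1)
  have e4 : c (m + 1) (k + 2)
      = (-1 : ℝ) ^ (k + 1 + 1) * 4 ^ (k + 1) * (Nat.choose (m + (k + 1)) (2 * (k + 1)))
        * (2 * (m : ℕ) + 1) / (2 * (k + 1 : ℕ) + 1) := c_eq m (k + 1)
  rw [e1, e2, e3, e4,
    show m + 2 + (k + 1) = m + k + 3 from by omega,
    show m + 1 + (k + 1) = m + k + 2 from by omega,
    show m + (k + 1) = m + k + 1 from by omega,
    show m + 1 + k = m + k + 1 from by omega,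
    show 2 * (k + 1) = 2 * k + 2 from by omega]
  have hc := core m k
  have h1 : (2 * (k : ℝ) + 1) ≠ 0 := by positivity
  have h3 : (2 * (k : ℝ) + 3) ≠ 0 := by positivity
  push_cast
  field_simp
  linear_combination ((-1:ℝ) ^ k * 4 ^ k * 4) * hc

lemma key1 (m : ℕ) : c (m + 3) 1 = 2 * c (m + 2) 1 - c (m + 1) 1 := by
  have e1 : c (m + 3) 1 = (-1 : ℝ) ^ (0 + 1) * 4 ^ 0 * (Nat.choose (m + 2 + 0) (2 * 0))
      * (2 * (m + 2 : ℕ) + 1) / (2 * (0 : ℕ) + 1) := c_eq (m + 2) 0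
  have e2 : c (m + 2) 1 = (-1 : ℝ) ^ (0 + 1) * 4 ^ 0 * (Nat.choose (m + 1 + 0) (2 * 0))
      * (2 * (m + 1 : ℕ) + 1) / (2 * (0 : ℕ) + 1) := c_eq (m + 1) 0
  have e3 : c (m + 1) 1 = (-1 : ℝ) ^ (0 + 1) * 4 ^ 0 * (Nat.choose (m + 0) (2 * 0))
      * (2 * (m : ℕ) + 1) / (2 * (0 : ℕ) + 1) := c_eq m 0
  rw [e1, e2, e3]
  simp [Nat.choose]
  ring

lemma p_rec (m : ℕ) (x : ℝ) :
    p (m + 3) x = -2 * (2 * x ^ 2 - 1) * p (m + 2) x - p (m + 1) x := by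
  rw [p_eq, p_eq, p_eq]
  have hz1 : c (m + 1) (m + 2) = 0 := by
    have := c_zero m (m + 1) (by omega); rwa [show m + 1 + 1 = m + 2 from rfl] at this
  have hz2 : c (m + 1) (m + 3) = 0 := by
    have := c_zero m (m + 2) (by omega); rwa [show m + 2 + 1 = m + 3 from rfl] at this
  have hz3 : c (m + 2) (m + 3) = 0 := by
    have := c_zero (m + 1) (m + 2) (by omega)
    rwa [show m + 1 + 1 = m + 2 from rfl, show m + 2 + 1 = m + 3 from rfl] at this
  have A3 : ∑ k ∈ Finset.range (m + 3), c (m + 3) (k + 1) * x ^ (2 * k + 1)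
      = (∑ k ∈ Finset.range (m + 2), c (m + 3) (k + 2) * x ^ (2 * k + 3)) + c (m + 3) 1 * x := by
    rw [Finset.sum_range_succ' (fun k => c (m + 3) (k + 1) * x ^ (2 * k + 1)) (m + 2)]
    norm_num
    refine Finset.sum_congr rfl fun k _ => ?_
    rw [show k + 1 + 1 = k + 2 from rfl, show 2 * (k + 1) + 1 = 2 * k + 3 from by omega]
  have A2' : ∑ k ∈ Finset.range (m + 2), c (m + 2) (k + 1) * x ^ (2 * k + 1)
      = (∑ k ∈ Finset.range (m + 2), c (m + 2) (k + 2) * x ^ (2 * k + 3)) + c (m + 2) 1 * x := by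
    have ext : ∑ k ∈ Finset.range (m + 2), c (m + 2) (k + 1) * x ^ (2 * k + 1)
        = ∑ k ∈ Finset.range (m + 3), c (m + 2) (k + 1) * x ^ (2 * k + 1) := by
      rw [Finset.sum_range_succ (fun k => c (m + 2) (k + 1) * x ^ (2 * k + 1)) (m + 2),
        show m + 2 + 1 = m + 3 from rfl, hz3]
      ring
    rw [ext, Finset.sum_range_succ' (fun k => c (m + 2) (k + 1) * x ^ (2 * k + 1)) (m + 2)]
    norm_num
    refine Finset.sum_congr rfl fun k _ => ?_
    rw [show k + 1 + 1 = k + 2 from rfl, show 2 * (k + 1) + 1 = 2 * k + 3 from by omega]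
  have A1 : ∑ k ∈ Finset.range (m + 1), c (m + 1) (k + 1) * x ^ (2 * k + 1)
      = (∑ k ∈ Finset.range (m + 2), c (m + 1) (k + 2) * x ^ (2 * k + 3)) + c (m + 1) 1 * x := by
    have ext : ∑ k ∈ Finset.range (m + 1), c (m + 1) (k + 1) * x ^ (2 * k + 1)
        = ∑ k ∈ Finset.range (m + 3), c (m + 1) (k + 1) * x ^ (2 * k + 1) := by
      rw [Finset.sum_range_succ (fun k => c (m + 1) (k + 1) * x ^ (2 * k + 1)) (m + 2),
        Finset.sum_range_succ (fun k => c (m + 1) (k + 1) * x ^ (2 * k + 1)) (m + 1),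
        show m + 2 + 1 = m + 3 from rfl, show m + 1 + 1 = m + 2 from rfl, hz1, hz2]
      ring
    rw [ext, Finset.sum_range_succ' (fun k => c (m + 1) (k + 1) * x ^ (2 * k + 1)) (m + 2)]
    norm_num
    refine Finset.sum_congr rfl fun k _ => ?_
    rw [show k + 1 + 1 = k + 2 from rfl, show 2 * (k + 1) + 1 = 2 * k + 3 from by omega]
  have keysum : ∑ k ∈ Finset.range (m + 2), c (m + 3) (k + 2) * x ^ (2 * k + 3)
      = (∑ k ∈ Finset.range (m + 2), (-4) * c (m + 2) (k + 1) * x ^ (2 * k + 3))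
        + 2 * (∑ k ∈ Finset.range (m + 2), c (m + 2) (k + 2) * x ^ (2 * k + 3))
        - ∑ k ∈ Finset.range (m + 2), c (m + 1) (k + 2) * x ^ (2 * k + 3) := by
    rw [Finset.mul_sum, ← Finset.sum_add_distrib, ← Finset.sum_sub_distrib]
    refine Finset.sum_congr rfl fun k _ => ?_
    rw [key m k]; ring
  have A2 : ∑ k ∈ Finset.range (m + 2), (-4) * c (m + 2) (k + 1) * x ^ (2 * k + 3)
      = -4 * x ^ 2 * ((∑ k ∈ Finset.range (m + 2), c (m + 2) (k + 2) * x ^ (2 * k + 3))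
          + c (m + 2) 1 * x) := by
    rw [← A2', Finset.mul_sum]
    refine Finset.sum_congr rfl fun k _ => ?_
    rw [show 2 * k + 3 = (2 * k + 1) + 2 from by omega, pow_add]
    ring
  rw [A3, keysum, key1 m, A2, A2', A1]
  ring

section Qside

variable {x : ℝ} (hx : 1 ≤ x ^ 2)

lemma hs_sq (hx : 1 ≤ x ^ 2) : (Real.sqrt (x ^ 2 * (x ^ 2 - 1))) ^ 2 = x ^ 2 * (x ^ 2 - 1) :=
  Real.sq_sqrt (by nlinarith [sq_nonneg x])

lemma hx_ne (hx : 1 ≤ x ^ 2) : x ≠ 0 := by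
  intro h; rw [h] at hx; norm_num at hx

lemma q_rec (hx : 1 ≤ x ^ 2) (i : ℕ) :
    q (i + 2) x = -2 * (2 * x ^ 2 - 1) * q (i + 1) x - q i x := by
  have hs := hs_sq hx
  set s := Real.sqrt (x ^ 2 * (x ^ 2 - 1)) with hsdef
  have hA : (1 - 2 * x ^ 2 + 2 * s) ^ 2
      = (2 - 4 * x ^ 2) * (1 - 2 * x ^ 2 + 2 * s) - 1 := by linear_combination 4 * hs
  have hB : (1 - 2 * x ^ 2 - 2 * s) ^ 2
      = (2 - 4 * x ^ 2) * (1 - 2 * x ^ 2 - 2 * s) - 1 := by linear_combination 4 * hs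
  have hApow : (1 - 2 * x ^ 2 + 2 * s) ^ (i + 2)
      = (2 - 4 * x ^ 2) * (1 - 2 * x ^ 2 + 2 * s) ^ (i + 1) - (1 - 2 * x ^ 2 + 2 * s) ^ i := by
    have : (1 - 2 * x ^ 2 + 2 * s) ^ (i + 2)
        = (1 - 2 * x ^ 2 + 2 * s) ^ i * (1 - 2 * x ^ 2 + 2 * s) ^ 2 := by ring
    rw [this, hA]; ring
  have hBpow : (1 - 2 * x ^ 2 - 2 * s) ^ (i + 2)
      = (2 - 4 * x ^ 2) * (1 - 2 * x ^ 2 - 2 * s) ^ (i + 1) - (1 - 2 * x ^ 2 - 2 * s) ^ i := by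
    have : (1 - 2 * x ^ 2 - 2 * s) ^ (i + 2)
        = (1 - 2 * x ^ 2 - 2 * s) ^ i * (1 - 2 * x ^ 2 - 2 * s) ^ 2 := by ring
    rw [this, hB]; ring
  rw [q, q, q, ← hsdef, hApow, hBpow]
  ring

lemma q_one (hx : 1 ≤ x ^ 2) : q 1 x = -x := by
  have hs := hs_sq hx
  have hx0 := hx_ne hx
  rw [q]
  set s := Real.sqrt (x ^ 2 * (x ^ 2 - 1)) with hsdef
  field_simp
  linear_combination 4 * hs

lemma q_two (hx : 1 ≤ x ^ 2) : q 2 x = 4 * x ^ 3 - 3 * x := by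
  have hs := hs_sq hx
  have hx0 := hx_ne hx
  rw [q]
  set s := Real.sqrt (x ^ 2 * (x ^ 2 - 1)) with hsdef
  field_simp
  linear_combination (8 - 8 * x ^ 2) * hs

lemma p_one (x : ℝ) : p 1 x = -x := by
  rw [p_eq, Finset.sum_range_one]
  have : c 1 1 = -1 := by
    rw [show c 1 1 = c (0 + 1) (0 + 1) from rfl, c_eq]; norm_num
  rw [this]; ring

lemma p_two (x : ℝ) : p 2 x = 4 * x ^ 3 - 3 * x := by
  rw [p_eq, Finset.sum_range_succ, Finset.sum_range_one]
  have h1 : c 2 1 = -3 := by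
    rw [show c 2 1 = c (1 + 1) (0 + 1) from rfl, c_eq]; norm_num
  have h2 : c 2 2 = 4 := by
    rw [show c 2 2 = c (1 + 1) (1 + 1) from rfl, c_eq]; norm_num
  rw [h1, h2]; ring

end Qside

lemma main (x : ℝ) (hx : 1 ≤ x ^ 2) : ∀ m : ℕ, p (m + 1) x = q (m + 1) x ∧ p (m + 2) x = q (m + 2) x := by
  intro m
  induction m with
  | zero => exact ⟨by rw [p_one, q_one hx], by rw [p_two, q_two hx]⟩
  | succ n ih =>
    refine ⟨ih.2, ?_⟩
    rw [show n + 1 + 2 = n + 3 from rfl, p_rec, q_rec hx, ih.1, ih.2]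

end Stmt9

theorem stmt_9 (i : ℕ) (hi : 1 ≤ i) (x : ℝ) (hx : 1 ≤ x ^ 2) :
    p i x = (1 / (2 * x)) *
      (Real.sqrt (x ^ 2 * (x ^ 2 - 1)) *
          ((1 - 2 * x ^ 2 + 2 * Real.sqrt (x ^ 2 * (x ^ 2 - 1))) ^ i
            - (1 - 2 * x ^ 2 - 2 * Real.sqrt (x ^ 2 * (x ^ 2 - 1))) ^ i)
        + x ^ 2 *
          ((1 - 2 * x ^ 2 + 2 * Real.sqrt (x ^ 2 * (x ^ 2 - 1))) ^ i
            + (1 - 2 * x ^ 2 - 2 * Real.sqrt (x ^ 2 * (x ^ 2 - 1))) ^ i)) := by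
  obtain ⟨m, rfl⟩ := Nat.exists_eq_add_of_le hi
  rw [show 1 + m = m + 1 from by omega]
  exact (Stmt9.main x hx m).1
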